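/- arXiv:1101.2877 — 7 statements merged into one kernel-verified Lean document; each statement's English description precedes it below -/
import Mathlib

section
/- Let N ≥ 2. For ξ : {0,1,…,N+1} → ℕ define ψ(ξ) = (1/(N+1))·Σ_{i=0}^{N+1} i·ξ_i. Then ψ is harmonic for the dual generator with λ = 1, i.e. for every ξ: 2ξ_1[ψ(ξ^{1,0}) − ψ(ξ)] + Σ_{i=1}^{N−1}( 2ξ_{i+1}(2ξ_i+1)[ψ(ξ^{i+1,i}) − ψ(ξ)] + 2ξ_i(2ξ_{i+1}+1)[ψ(ξ^{i,i+1}) − ψ(ξ)] ) + 2ξ_N[ψ(ξ^{N,N+1}) − ψ(ξ)] = 0. -/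
/-- `ξ^{i,j}`: the configuration obtained from `ξ` by removing one particle from
site `i` and adding one at site `j`. -/
def moveParticle (ξ : ℕ → ℕ) (i j : ℕ) : ℕ → ℕ :=
  fun k => if k = i then ξ i - 1 else if k = j then ξ j + 1 else ξ k

/-- `ψ(ξ) = (1/(N+1))·Σ_{i=0}^{N+1} i·ξ_i`. -/
noncomputable def psiLinear (N : ℕ) (ξ : ℕ → ℕ) : ℝ :=
  (1 / ((N : ℝ) + 1)) * ∑ i ∈ Finset.range (N + 2), (i : ℝ) * ξ i


lemma psi_move (N : ℕ) (ξ : ℕ → ℕ) (i j : ℕ) (hi : i < N + 2) (hj : j < N + 2)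
    (hij : i ≠ j) :
    (ξ i : ℝ) * (psiLinear N (moveParticle ξ i j) - psiLinear N ξ)
      = (ξ i : ℝ) * (((j : ℝ) - i) / ((N : ℝ) + 1)) := by
  rcases Nat.eq_zero_or_pos (ξ i) with h | h
  · simp [h]
  · have h1 : 1 ≤ ξ i := h
    congr 1
    unfold psiLinear moveParticle
    rw [← mul_sub, ← Finset.sum_sub_distrib]
    have hcongr : ∀ k ∈ Finset.range (N + 2),
        ((k : ℝ) * ((if k = i then ξ i - 1 else if k = j then ξ j + 1 else ξ k : ℕ) : ℝ)
          - (k : ℝ) * ξ k)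
        = (if k = i then -(i : ℝ) else 0) + (if k = j then (j : ℝ) else 0) := by
      intro k _
      by_cases hk : k = i
      · subst hk
        rw [if_pos rfl, if_pos rfl, if_neg hij, Nat.cast_sub h1]
        push_cast
        ring
      · rw [if_neg hk, if_neg hk]
        by_cases hk' : k = j
        · subst hk'
          rw [if_pos rfl, if_pos rfl]
          push_cast
          ring
        · rw [if_neg hk', if_neg hk']
          ring
    rw [Finset.sum_congr rfl hcongr, Finset.sum_add_distrib,
      Finset.sum_ite_eq' (Finset.range (N + 2)) i (fun _ => -(i : ℝ)),
      Finset.sum_ite_eq' (Finset.range (N + 2)) j (fun _ => (j : ℝ)),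
      if_pos (Finset.mem_range.mpr hi), if_pos (Finset.mem_range.mpr hj)]
    ring

lemma telescope_Icc (f : ℕ → ℝ) (n : ℕ) (hn : 1 ≤ n) :
    ∑ i ∈ Finset.Icc 1 n, (f i - f (i + 1)) = f 1 - f (n + 1) := by
  induction n with
  | zero => omega
  | succ m ih =>
    rcases Nat.eq_zero_or_pos m with hm | hm
    · subst hm; simp
    · rw [← Finset.insert_Icc_right_eq_Icc_add_one (by omega),
        Finset.sum_insert (by simp), ih hm]
      ring

/-- The function `ψ(ξ) = (1/(N+1))·Σ_{i=0}^{N+1} i·ξ_i` is harmonic for the dual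
generator of the Brownian momentum process with `λ = 1`. -/
theorem psi_harmonic_dual_generator
    (N : ℕ) (hN : 2 ≤ N) (ξ : ℕ → ℕ) :
    2 * (ξ 1 : ℝ) * (psiLinear N (moveParticle ξ 1 0) - psiLinear N ξ) +
      (∑ i ∈ Finset.Icc 1 (N - 1),
        (2 * (ξ (i + 1) : ℝ) * (2 * (ξ i : ℝ) + 1) *
            (psiLinear N (moveParticle ξ (i + 1) i) - psiLinear N ξ) +
          2 * (ξ i : ℝ) * (2 * (ξ (i + 1) : ℝ) + 1) *
            (psiLinear N (moveParticle ξ i (i + 1)) - psiLinear N ξ))) +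
      2 * (ξ N : ℝ) * (psiLinear N (moveParticle ξ N (N + 1)) - psiLinear N ξ) = 0 := by
  have h1 := psi_move N ξ 1 0 (by omega) (by omega) (by omega)
  have hNe := psi_move N ξ N (N + 1) (by omega) (by omega) (by omega)
  have hsum : ∑ i ∈ Finset.Icc 1 (N - 1),
      (2 * (ξ (i + 1) : ℝ) * (2 * (ξ i : ℝ) + 1) *
          (psiLinear N (moveParticle ξ (i + 1) i) - psiLinear N ξ) +
        2 * (ξ i : ℝ) * (2 * (ξ (i + 1) : ℝ) + 1) *
          (psiLinear N (moveParticle ξ i (i + 1)) - psiLinear N ξ))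
      = ∑ i ∈ Finset.Icc 1 (N - 1),
          (2 / ((N : ℝ) + 1)) * ((ξ i : ℝ) - (ξ (i + 1) : ℝ)) := by
    refine Finset.sum_congr rfl fun i hi => ?_
    rw [Finset.mem_Icc] at hi
    have ha := psi_move N ξ (i + 1) i (by omega) (by omega) (by omega)
    have hb := psi_move N ξ i (i + 1) (by omega) (by omega) (by omega)
    push_cast at ha hb ⊢
    linear_combination (2 * (2 * (ξ i : ℝ) + 1)) * ha + (2 * (2 * (ξ (i + 1) : ℝ) + 1)) * hb
  have htel : ∑ i ∈ Finset.Icc 1 (N - 1),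
      (2 / ((N : ℝ) + 1)) * ((ξ i : ℝ) - (ξ (i + 1) : ℝ))
      = (2 / ((N : ℝ) + 1)) * ((ξ 1 : ℝ) - (ξ N : ℝ)) := by
    rw [← Finset.mul_sum, telescope_Icc (fun i => (ξ i : ℝ)) (N - 1) (by omega)]
    have : N - 1 + 1 = N := by omega
    rw [this]
  rw [hsum, htel]
  push_cast at h1 hNe
  linear_combination 2 * h1 + 2 * hNe
end

section
/- Let N ≥ 2, λ > 0, T_L, T_R > 0, and let T_i = λα·i + b for i ∈ {1,…,N} with α = (T_R − T_L)/(λ(N−1)+2) and b = (T_L + T_R + λ(N·T_L − T_R))/(λ(N−1)+2) (so all T_i > 0). For ξ : {0,…,N+1} → ℕ define ψ(ξ) = T_L^{ξ_0}·T_R^{ξ_{N+1}}·∏_{i=1}^N T_i^{ξ_i}. Then the dual generator applied to ψ satisfies the exact identity (L_d ψ)(ξ) = 4λ²α²·ψ(ξ)·Σ_{i=1}^{N−1} ξ_i ξ_{i+1}/(T_i T_{i+1}), where (L_d ψ)(ξ) = 2λξ_1[ψ(ξ^{1,0}) − ψ(ξ)] + Σ_{i=1}^{N−1}( 2ξ_{i+1}(2ξ_i+1)[ψ(ξ^{i+1,i})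 − ψ(ξ)] + 2ξ_i(2ξ_{i+1}+1)[ψ(ξ^{i,i+1}) − ψ(ξ)] ) + 2λξ_N[ψ(ξ^{N,N+1}) − ψ(ξ)]. -/
/-!
`ψ` is the product `∏_k w_k ^ ξ_k` over all sites `0, …, N+1`, with `w_0 = T_L`,
`w_{N+1} = T_R` and `w_i = T_i` in the bulk, so moving a particle from `i` to `j` multiplies
it by `w_j / w_i`. Because the profile is affine in the bulk with step `d = λα`, each bond
contributes `4 d² ψ ξ_i ξ_{i+1} / (T_i T_{i+1})` plus a difference of the fluxes
`2 d ξ_k ψ / T_k`, which telescopes to the fluxes at sites `1` and `N`. The choice of `α` and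
`b` gives `T_L - T_1 = -α` and `T_R - T_N = α`, and this is exactly what makes the two
boundary terms cancel these remaining fluxes.
-/

open Finset

def prodPow {K : Type*} [CommMonoid K] (s : Finset ℕ) (w : ℕ → K) (ζ : ℕ → ℕ) : K :=
  ∏ k ∈ s, w k ^ ζ k

section ProductMoments

variable {K : Type*} {s : Finset ℕ} {i j : ℕ} {ξ : ℕ → ℕ}

theorem prodPow_moveParticle_mul [CommMonoid K] (w : ℕ → K) (hij : i ≠ j) (hi : i ∈ s)
    (hj : j ∈ s) (hξ : ξ i ≠ 0) :
    prodPow s w (moveParticle ξ i j) * w i = prodPow s w ξ * w j := by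
  have hexp : ∀ k, moveParticle ξ i j k + (if k = i then 1 else 0) =
      ξ k + (if k = j then 1 else 0) := by
    intro k; unfold moveParticle; split_ifs <;> subst_vars <;> omega
  calc prodPow s w (moveParticle ξ i j) * w i
      = ∏ k ∈ s, w k ^ (moveParticle ξ i j k + if k = i then 1 else 0) := by
        simp only [prodPow, pow_add, prod_mul_distrib, pow_ite, pow_one, pow_zero, prod_ite_eq',
          if_pos hi]
    _ = ∏ k ∈ s, w k ^ (ξ k + if k = j then 1 else 0) := by simp_rw [hexp]
    _ = prodPow s w ξ * w j := by
        simp only [prodPow, pow_add, prod_mul_distrib, pow_ite, pow_one, pow_zero, prod_ite_eq',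
          if_pos hj]

theorem natCast_mul_prodPow_moveParticle_sub [Field K] (w : ℕ → K) (hij : i ≠ j) (hi : i ∈ s)
    (hj : j ∈ s) (hw : w i ≠ 0) :
    (ξ i : K) * (prodPow s w (moveParticle ξ i j) - prodPow s w ξ) =
      ξ i * prodPow s w ξ * (w j - w i) / w i := by
  rcases eq_or_ne (ξ i) 0 with hξ | hξ
  · simp [hξ]
  · field_simp
    linear_combination (ξ i : K) * prodPow_moveParticle_mul w hij hi hj hξ

theorem bond_prodPow_moveParticle [Field K] {w : ℕ → K} {d : K} (hi : i ∈ s) (hi' : i + 1 ∈ s)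
    (hw : w i ≠ 0) (hw' : w (i + 1) ≠ 0) (hd : w (i + 1) - w i = d) :
    2 * (ξ (i + 1) : K) * (2 * ξ i + 1) *
        (prodPow s w (moveParticle ξ (i + 1) i) - prodPow s w ξ) +
      2 * (ξ i : K) * (2 * ξ (i + 1) + 1) *
        (prodPow s w (moveParticle ξ i (i + 1)) - prodPow s w ξ) =
      4 * d ^ 2 * prodPow s w ξ * (ξ i * ξ (i + 1) / (w i * w (i + 1))) -
        (2 * d * ξ (i + 1) * prodPow s w ξ / w (i + 1) - 2 * d * ξ i * prodPow s w ξ / w i) := by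
  have hleft := natCast_mul_prodPow_moveParticle_sub (ξ := ξ) w (by omega) hi' hi hw'
  have hright := natCast_mul_prodPow_moveParticle_sub (ξ := ξ) w (by omega) hi hi' hw
  subst hd
  field_simp at hleft hright ⊢
  linear_combination (2 * (2 * (ξ i : K) + 1) * w i) * hleft
      + (2 * (2 * (ξ (i + 1) : K) + 1) * w (i + 1)) * hright

theorem dualGenerator_prodPow [Field K] {N : ℕ} (hN : 2 ≤ N) {w : ℕ → K} {c d : K}
    (hw : ∀ i, 1 ≤ i → i ≤ N → w i ≠ 0) (hd : ∀ i, 1 ≤ i → i < N → w (i + 1) - w i = d) :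
    let P := prodPow (range (N + 2)) w
    2 * c * (ξ 1 : K) * (P (moveParticle ξ 1 0) - P ξ) +
      (∑ i ∈ Icc 1 (N - 1),
        (2 * (ξ (i + 1) : K) * (2 * ξ i + 1) * (P (moveParticle ξ (i + 1) i) - P ξ) +
          2 * (ξ i : K) * (2 * ξ (i + 1) + 1) * (P (moveParticle ξ i (i + 1)) - P ξ))) +
      2 * c * (ξ N : K) * (P (moveParticle ξ N (N + 1)) - P ξ) =
    4 * d ^ 2 * P ξ * ∑ i ∈ Icc 1 (N - 1), (ξ i : K) * ξ (i + 1) / (w i * w (i + 1)) +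
      2 * ξ 1 * P ξ * (c * (w 0 - w 1) + d) / w 1 +
      2 * ξ N * P ξ * (c * (w (N + 1) - w N) - d) / w N := by
  intro P
  have mem_range_of {i} (h : i ≤ N + 1) : i ∈ range (N + 2) := mem_range.2 (by omega)
  have hbond : ∀ i ∈ Icc 1 (N - 1),
      2 * (ξ (i + 1) : K) * (2 * ξ i + 1) * (P (moveParticle ξ (i + 1) i) - P ξ) +
        2 * (ξ i : K) * (2 * ξ (i + 1) + 1) * (P (moveParticle ξ i (i + 1)) - P ξ) =
      4 * d ^ 2 * P ξ * ((ξ i : K) * ξ (i + 1) / (w i * w (i + 1))) -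
        (2 * d * ξ (i + 1) * P ξ / w (i + 1) - 2 * d * ξ i * P ξ / w i) := by
    intro i hi
    obtain ⟨hi₁, hiN⟩ := mem_Icc.1 hi
    exact bond_prodPow_moveParticle (mem_range_of (by omega)) (mem_range_of (by omega))
      (hw i hi₁ (by omega)) (hw (i + 1) (by omega) (by omega)) (hd i hi₁ (by omega))
  have hleft := natCast_mul_prodPow_moveParticle_sub (ξ := ξ) w one_ne_zero
    (mem_range_of (by omega)) (mem_range_of (by omega)) (hw 1 le_rfl (by omega))
  have hright := natCast_mul_prodPow_moveParticle_sub (ξ := ξ) w N.succ_ne_self.symm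
    (mem_range_of (by omega)) (mem_range_of le_rfl) (hw N (by omega) le_rfl)
  rw [sum_congr rfl hbond, sum_sub_distrib, ← mul_sum,
    sum_Icc_sub (by omega) (fun k => 2 * d * ξ k * P ξ / w k), Nat.sub_add_cancel (by omega)]
  linear_combination 2 * c * hleft + 2 * c * hright

end ProductMoments

section Profile

variable {N : ℕ} {lam TL TR α b : ℝ} {T : ℕ → ℝ}

theorem profile_mul_denom (hD : lam * ((N : ℝ) - 1) + 2 ≠ 0)
    (hα : α = (TR - TL) / (lam * ((N : ℝ) - 1) + 2))
    (hb : b = (TL + TR + lam * ((N : ℝ) * TL - TR)) / (lam * ((N : ℝ) - 1) + 2))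
    (hT : ∀ i : ℕ, T i = lam * α * i + b) (i : ℕ) :
    T i * (lam * ((N : ℝ) - 1) + 2) = lam * TL * (N - i) + lam * TR * (i - 1) + TL + TR := by
  rw [hT, hα, hb]; field_simp; ring

theorem profile_pos (hlam : 0 ≤ lam) (hTL : 0 < TL) (hTR : 0 < TR)
    (hD : 0 < lam * ((N : ℝ) - 1) + 2)
    (hα : α = (TR - TL) / (lam * ((N : ℝ) - 1) + 2))
    (hb : b = (TL + TR + lam * ((N : ℝ) * TL - TR)) / (lam * ((N : ℝ) - 1) + 2))
    (hT : ∀ i : ℕ, T i = lam * α * i + b) {i : ℕ} (hi₁ : 1 ≤ i) (hiN : i ≤ N) : 0 < T i := by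
  have hi₁' : (1 : ℝ) ≤ i := by exact_mod_cast hi₁
  have hiN' : (i : ℝ) ≤ N := by exact_mod_cast hiN
  refine pos_of_mul_pos_left (b := lam * ((N : ℝ) - 1) + 2) ?_ hD.le
  rw [profile_mul_denom hD.ne' hα hb hT]
  have := mul_nonneg (mul_nonneg hlam hTL.le) (sub_nonneg.2 hiN')
  have := mul_nonneg (mul_nonneg hlam hTR.le) (sub_nonneg.2 hi₁')
  linarith

theorem left_sub_profile_one (hD : lam * ((N : ℝ) - 1) + 2 ≠ 0)
    (hα : α = (TR - TL) / (lam * ((N : ℝ) - 1) + 2))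
    (hb : b = (TL + TR + lam * ((N : ℝ) * TL - TR)) / (lam * ((N : ℝ) - 1) + 2))
    (hT : ∀ i : ℕ, T i = lam * α * i + b) : TL - T 1 = -α := by
  rw [hT, hα, hb]; field_simp; push_cast; ring

theorem right_sub_profile_last (hD : lam * ((N : ℝ) - 1) + 2 ≠ 0)
    (hα : α = (TR - TL) / (lam * ((N : ℝ) - 1) + 2))
    (hb : b = (TL + TR + lam * ((N : ℝ) * TL - TR)) / (lam * ((N : ℝ) - 1) + 2))
    (hT : ∀ i : ℕ, T i = lam * α * i + b) : TR - T N = α := by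
  rw [hT, hα, hb]; field_simp; ring

end Profile

def siteTemperature (N : ℕ) (TL TR : ℝ) (T : ℕ → ℝ) (k : ℕ) : ℝ :=
  if k = 0 then TL else if k = N + 1 then TR else T k

theorem siteTemperature_of_le {N : ℕ} {TL TR : ℝ} {T : ℕ → ℝ} {k : ℕ} (h₁ : 1 ≤ k)
    (h₂ : k ≤ N) : siteTemperature N TL TR T k = T k := by
  rw [siteTemperature, if_neg (by omega), if_neg (by omega)]

theorem prodPow_siteTemperature (N : ℕ) (TL TR : ℝ) (T : ℕ → ℝ) (ξ : ℕ → ℕ) :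
    prodPow (range (N + 2)) (siteTemperature N TL TR T) ξ =
      TL ^ ξ 0 * TR ^ ξ (N + 1) * ∏ i ∈ Icc 1 N, T i ^ ξ i := by
  rw [prodPow, prod_range_succ, prod_range_succ', range_eq_Ico,
    prod_Ico_add' (fun k => siteTemperature N TL TR T k ^ ξ k), zero_add,
    Ico_add_one_right_eq_Icc, prod_congr rfl fun k hk => by
      rw [siteTemperature_of_le (mem_Icc.1 hk).1 (mem_Icc.1 hk).2]]
  simp only [siteTemperature, if_pos, Nat.succ_ne_zero, if_false]
  ring

/-- Exact identity for the dual generator applied to the local-equilibrium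
duality moments `ψ(ξ) = T_L^{ξ_0}·T_R^{ξ_{N+1}}·∏_{i=1}^N T_i^{ξ_i}`:
`(L_d ψ)(ξ) = 4λ²α²·ψ(ξ)·Σ_{i=1}^{N−1} ξ_i ξ_{i+1}/(T_i T_{i+1})`. -/
theorem dual_generator_on_local_equilibrium
    (N : ℕ) (hN : 2 ≤ N) (lam TL TR : ℝ) (hlam : 0 < lam)
    (hTL : 0 < TL) (hTR : 0 < TR) (α b : ℝ)
    (hα : α = (TR - TL) / (lam * ((N : ℝ) - 1) + 2))
    (hb : b = (TL + TR + lam * ((N : ℝ) * TL - TR)) / (lam * ((N : ℝ) - 1) + 2))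
    (T : ℕ → ℝ) (hT : ∀ i : ℕ, T i = lam * α * i + b)
    (ψ : (ℕ → ℕ) → ℝ)
    (hψ : ∀ ξ : ℕ → ℕ, ψ ξ = TL ^ ξ 0 * TR ^ ξ (N + 1) * ∏ i ∈ Finset.Icc 1 N, T i ^ ξ i)
    (ξ : ℕ → ℕ) :
    2 * lam * (ξ 1 : ℝ) * (ψ (moveParticle ξ 1 0) - ψ ξ) +
      (∑ i ∈ Finset.Icc 1 (N - 1),
        (2 * (ξ (i + 1) : ℝ) * (2 * (ξ i : ℝ) + 1) *
            (ψ (moveParticle ξ (i + 1) i) - ψ ξ) +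
          2 * (ξ i : ℝ) * (2 * (ξ (i + 1) : ℝ) + 1) *
            (ψ (moveParticle ξ i (i + 1)) - ψ ξ))) +
      2 * lam * (ξ N : ℝ) * (ψ (moveParticle ξ N (N + 1)) - ψ ξ)
    = 4 * lam ^ 2 * α ^ 2 * ψ ξ *
        ∑ i ∈ Finset.Icc 1 (N - 1), (ξ i : ℝ) * (ξ (i + 1) : ℝ) / (T i * T (i + 1)) := by
  have hD : 0 < lam * ((N : ℝ) - 1) + 2 := by
    have : (2 : ℝ) ≤ N := by exact_mod_cast hN
    nlinarith
  set w := siteTemperature N TL TR T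
  have hw : ∀ i, 1 ≤ i → i ≤ N → w i = T i := fun i => siteTemperature_of_le
  have hw₀ : ∀ i, 1 ≤ i → i ≤ N → w i ≠ 0 := fun i h₁ h₂ =>
    hw i h₁ h₂ ▸ (profile_pos hlam.le hTL hTR hD hα hb hT h₁ h₂).ne'
  have hstep : ∀ i, 1 ≤ i → i < N → w (i + 1) - w i = lam * α := fun i h₁ h₂ => by
    rw [hw i h₁ h₂.le, hw (i + 1) (by omega) h₂, hT, hT]; push_cast; ring
  have hleft : lam * (w 0 - w 1) + lam * α = 0 := by
    rw [show w 0 = TL from if_pos rfl, hw 1 le_rfl (by omega),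
      left_sub_profile_one hD.ne' hα hb hT]; ring
  have hright : lam * (w (N + 1) - w N) - lam * α = 0 := by
    rw [show w (N + 1) = TR by simp [w, siteTemperature], hw N (by omega) le_rfl,
      right_sub_profile_last hD.ne' hα hb hT]; ring
  obtain rfl : ψ = prodPow (range (N + 2)) w :=
    funext fun ζ => (hψ ζ).trans (prodPow_siteTemperature N TL TR T ζ).symm
  rw [dualGenerator_prodPow (ξ := ξ) (c := lam) hN hw₀ hstep, hleft, hright,
    sum_congr rfl fun i hi => by
      obtain ⟨h₁, h₂⟩ := mem_Icc.1 hi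
      rw [hw i h₁ (by omega), hw (i + 1) (by omega) (by omega)]]
  ring
end

section
/- Let N ≥ 2 and T_L, T_R > 0 be fixed, and for λ > 0 let T_i^{(λ)} = λ(T_R−T_L)/(λ(N−1)+2)·i + (T_L + T_R + λ(N·T_L − T_R))/(λ(N−1)+2), and ψ_λ(ξ) = T_L^{ξ_0}·T_R^{ξ_{N+1}}·∏_{i=1}^N (T_i^{(λ)})^{ξ_i} for ξ : {0,…,N+1} → ℕ. Then there exists λ₀ > 0 such that for every ξ there is a constant A(ξ) > 0 with |(L_d ψ_λ)(ξ)| ≤ A(ξ)·λ² for all 0 < λ ≤ λ₀; consequently, for every K ∈ ℕ there is C(K) > 0 with sup over all ξ with Σ_{i=0}^{N+1} ξ_i = K of |(L_d ψ_λ)(ξ)| ≤ C(K)·λ² for all 0 < λ ≤ λ₀. -/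
/-- The temperature profile `T_i^{(λ)} = a·i + b` of the Brownian momentum process. -/
noncomputable def tempProfile (N : ℕ) (lam TL TR : ℝ) (i : ℕ) : ℝ :=
  lam * (TR - TL) / (lam * ((N : ℝ) - 1) + 2) * i +
    (TL + TR + lam * ((N : ℝ) * TL - TR)) / (lam * ((N : ℝ) - 1) + 2)

/-- `ψ_λ(ξ) = T_L^{ξ_0}·T_R^{ξ_{N+1}}·∏_{i=1}^N (T_i^{(λ)})^{ξ_i}`. -/
noncomputable def psiLam (N : ℕ) (lam TL TR : ℝ) (ξ : ℕ → ℕ) : ℝ :=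
  TL ^ ξ 0 * TR ^ ξ (N + 1) * ∏ i ∈ Finset.Icc 1 N, tempProfile N lam TL TR i ^ ξ i

/-- The dual generator `L_d` of the symmetric inclusion process `SIP_λ` applied to `f`. -/
noncomputable def dualGen (N : ℕ) (lam : ℝ) (f : (ℕ → ℕ) → ℝ) (ξ : ℕ → ℕ) : ℝ :=
  2 * lam * (ξ 1 : ℝ) * (f (moveParticle ξ 1 0) - f ξ) +
    (∑ i ∈ Finset.Icc 1 (N - 1),
      (2 * (ξ (i + 1) : ℝ) * (2 * (ξ i : ℝ) + 1) * (f (moveParticle ξ (i + 1) i) - f ξ) +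
        2 * (ξ i : ℝ) * (2 * (ξ (i + 1) : ℝ) + 1) * (f (moveParticle ξ i (i + 1)) - f ξ))) +
    2 * lam * (ξ N : ℝ) * (f (moveParticle ξ N (N + 1)) - f ξ)

/-!
Since `ψ_λ` is a product over sites, moving one particle from `i` to `j` multiplies it by
`T_j / T_i` (with `T_0 = T_L`, `T_{N+1} = T_R`). On a bulk bond the SIP rates then split into an
independent-walk part, of first order in `T_{i+1} - T_i` and telescoping along the chain, and an
inclusion part `4 ξ_i ξ_{i+1} (T_{i+1} - T_i)² / (T_i T_{i+1})`. The profile is linear with slope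
`a = λ (T_R - T_L) / (λ (N - 1) + 2)`, and the boundary fluxes `λ (T_1 - T_L)` and `λ (T_R - T_N)`
are also equal to `a`; so the telescoped first-order terms cancel the boundary terms exactly and
`L_d ψ_λ = ψ_λ · Σ 4 ξ_i ξ_{i+1} a² / (T_i T_{i+1})`. Every `T_i` is a convex combination of
`T_L` and `T_R`, and `a = O(λ)`, which gives the bound `O(λ²)`, uniformly for a fixed number of
particles.
-/

open Finset

lemma prod_pow_moveParticle_mul {M : Type*} [CommMonoid M] (T : ℕ → M) {s : Finset ℕ}
    {ξ : ℕ → ℕ} {i j : ℕ} (hi : i ∈ s) (hj : j ∈ s) (hij : i ≠ j) (hξ : 0 < ξ i) :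
    (∏ k ∈ s, T k ^ moveParticle ξ i j k) * T i = (∏ k ∈ s, T k ^ ξ k) * T j := by
  have hj' : j ∈ s.erase i := mem_erase.2 ⟨hij.symm, hj⟩
  have hrest : ∏ k ∈ (s.erase i).erase j, T k ^ moveParticle ξ i j k =
      ∏ k ∈ (s.erase i).erase j, T k ^ ξ k :=
    prod_congr rfl fun k hk => by
      obtain ⟨hkj, hki, -⟩ : k ≠ j ∧ k ≠ i ∧ k ∈ s := by simpa using hk
      simp [moveParticle, hki, hkj]
  rw [← mul_prod_erase s (fun k => T k ^ moveParticle ξ i j k) hi,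
    ← mul_prod_erase _ (fun k => T k ^ moveParticle ξ i j k) hj', hrest,
    ← mul_prod_erase s (fun k => T k ^ ξ k) hi, ← mul_prod_erase _ (fun k => T k ^ ξ k) hj']
  obtain ⟨n, hn⟩ := Nat.exists_eq_add_of_lt hξ
  simp only [moveParticle, if_pos, if_neg hij.symm, hn, zero_add, Nat.add_sub_cancel, pow_succ]
  ac_rfl

lemma natCast_mul_prod_pow_moveParticle_sub {K : Type*} [Field K] {T : ℕ → K} {s : Finset ℕ}
    {ξ : ℕ → ℕ} {i j : ℕ} (hi : i ∈ s) (hj : j ∈ s) (hij : i ≠ j) (hTi : T i ≠ 0) :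
    (ξ i : K) * (∏ k ∈ s, T k ^ moveParticle ξ i j k - ∏ k ∈ s, T k ^ ξ k) =
      ξ i * (T j / T i - 1) * ∏ k ∈ s, T k ^ ξ k := by
  rcases (ξ i).eq_zero_or_pos with h | h
  · simp [h]
  · have hmove := prod_pow_moveParticle_mul T hi hj hij h
    rw [← eq_div_iff hTi] at hmove
    rw [hmove]
    field_simp

lemma sip_bond_identity {K : Type*} [Field K] {x y : K} (hx : x ≠ 0) (hy : y ≠ 0) (m n : K) :
    2 * n * (2 * m + 1) * (x / y - 1) + 2 * m * (2 * n + 1) * (y / x - 1) =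
      4 * m * n * (y - x) ^ 2 / (x * y) + 2 * (y - x) * (m / x - n / y) := by
  field_simp
  ring

lemma sum_Icc_mul_succ_le_sq (N : ℕ) (ξ : ℕ → ℕ) :
    ∑ i ∈ Icc 1 (N - 1), ξ i * ξ (i + 1) ≤ (∑ k ∈ range (N + 2), ξ k) ^ 2 := by
  set K := ∑ k ∈ range (N + 2), ξ k
  have hle : ∀ k < N + 2, ξ k ≤ K := fun k hk =>
    single_le_sum (fun _ _ => Nat.zero_le _) (mem_range.2 hk)
  calc ∑ i ∈ Icc 1 (N - 1), ξ i * ξ (i + 1)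
      ≤ ∑ i ∈ Icc 1 (N - 1), ξ i * K :=
        sum_le_sum fun i hi => Nat.mul_le_mul_left _ (hle _ (by simp at hi; omega))
    _ = (∑ i ∈ Icc 1 (N - 1), ξ i) * K := (sum_mul ..).symm
    _ ≤ K * K :=
        Nat.mul_le_mul_right _ <| sum_le_sum_of_subset fun i hi => by simp at hi ⊢; omega
    _ = K ^ 2 := (sq K).symm

noncomputable def extendedProfile (N : ℕ) (lam TL TR : ℝ) (k : ℕ) : ℝ :=
  if k = 0 then TL else if k = N + 1 then TR else tempProfile N lam TL TR k

noncomputable def profileSlope (N : ℕ) (lam TL TR : ℝ) : ℝ :=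
  lam * (TR - TL) / (lam * ((N : ℝ) - 1) + 2)

section Profile

variable {N : ℕ} {lam TL TR : ℝ}

lemma extendedProfile_of_pos_of_le {k : ℕ} (h1 : 1 ≤ k) (hk : k ≤ N) :
    extendedProfile N lam TL TR k = tempProfile N lam TL TR k := by
  rw [extendedProfile, if_neg (by omega), if_neg (by omega)]

lemma extendedProfile_zero : extendedProfile N lam TL TR 0 = TL := if_pos rfl

lemma extendedProfile_succ_self : extendedProfile N lam TL TR (N + 1) = TR := by
  simp [extendedProfile]

lemma psiLam_eq_prod_extendedProfile (ξ : ℕ → ℕ) :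
    psiLam N lam TL TR ξ = ∏ k ∈ range (N + 2), extendedProfile N lam TL TR k ^ ξ k := by
  have hbulk : ∏ k ∈ Icc 1 N, tempProfile N lam TL TR k ^ ξ k =
      ∏ k ∈ range N, extendedProfile N lam TL TR (k + 1) ^ ξ (k + 1) := by
    rw [← Ico_add_one_right_eq_Icc, prod_Ico_eq_prod_range, Nat.add_sub_cancel]
    refine prod_congr rfl fun k hk => ?_
    rw [add_comm 1 k, extendedProfile_of_pos_of_le (by omega) (mem_range.1 hk)]
  rw [psiLam, hbulk, prod_range_succ, prod_range_succ', extendedProfile_zero,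
    extendedProfile_succ_self]
  ring

lemma tempProfile_mem_uIcc (hlam : 0 ≤ lam) {i : ℕ} (h1 : 1 ≤ i) (hi : i ≤ N) :
    tempProfile N lam TL TR i ∈ Set.uIcc TL TR := by
  have h1' : (1 : ℝ) ≤ i := by exact_mod_cast h1
  have hi' : (i : ℝ) ≤ N := by exact_mod_cast hi
  have hD : 0 < lam * ((N : ℝ) - 1) + 2 := by nlinarith
  rw [← segment_eq_uIcc]
  -- `T_i = ((1 + λ (N - i)) T_L + (1 + λ (i - 1)) T_R) / (λ (N - 1) + 2)`
  refine ⟨(1 + lam * (N - i)) / (lam * ((N : ℝ) - 1) + 2),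
    (1 + lam * (i - 1)) / (lam * ((N : ℝ) - 1) + 2), ?_, ?_, ?_, ?_⟩
  · have : 0 ≤ lam * (N - i) := mul_nonneg hlam (by linarith)
    positivity
  · have : 0 ≤ lam * (i - 1) := mul_nonneg hlam (by linarith)
    positivity
  · field_simp
    ring
  · rw [tempProfile, smul_eq_mul, smul_eq_mul]
    field_simp
    ring

lemma extendedProfile_mem_uIcc (hlam : 0 ≤ lam) {k : ℕ} (hk : k ≤ N + 1) :
    extendedProfile N lam TL TR k ∈ Set.uIcc TL TR := by
  unfold extendedProfile
  split_ifs
  · exact Set.left_mem_uIcc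
  · exact Set.right_mem_uIcc
  · exact tempProfile_mem_uIcc hlam (by omega) (by omega)

lemma min_le_extendedProfile (hlam : 0 ≤ lam) {k : ℕ} (hk : k ≤ N + 1) :
    min TL TR ≤ extendedProfile N lam TL TR k :=
  (extendedProfile_mem_uIcc hlam hk).1

lemma extendedProfile_le_max (hlam : 0 ≤ lam) {k : ℕ} (hk : k ≤ N + 1) :
    extendedProfile N lam TL TR k ≤ max TL TR :=
  (extendedProfile_mem_uIcc hlam hk).2

lemma extendedProfile_pos (hlam : 0 ≤ lam) (hTL : 0 < TL) (hTR : 0 < TR) {k : ℕ}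
    (hk : k ≤ N + 1) : 0 < extendedProfile N lam TL TR k :=
  (lt_min hTL hTR).trans_le (min_le_extendedProfile hlam hk)

lemma tempProfile_succ_sub (i : ℕ) :
    tempProfile N lam TL TR (i + 1) - tempProfile N lam TL TR i = profileSlope N lam TL TR := by
  rw [tempProfile, tempProfile, profileSlope]
  push_cast
  ring

lemma lam_mul_tempProfile_one_sub (hD : lam * ((N : ℝ) - 1) + 2 ≠ 0) :
    lam * (tempProfile N lam TL TR 1 - TL) = profileSlope N lam TL TR := by
  rw [tempProfile, profileSlope]
  field_simp
  ring

lemma lam_mul_sub_tempProfile_self (hD : lam * ((N : ℝ) - 1) + 2 ≠ 0) :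
    lam * (TR - tempProfile N lam TL TR N) = profileSlope N lam TL TR := by
  rw [tempProfile, profileSlope]
  field_simp
  ring

lemma four_mul_profileSlope_sq_le (hN : 1 ≤ N) (hlam : 0 ≤ lam) :
    4 * profileSlope N lam TL TR ^ 2 ≤ (lam * (TR - TL)) ^ 2 := by
  have hD : 2 ≤ lam * ((N : ℝ) - 1) + 2 := by
    have : (1 : ℝ) ≤ N := by exact_mod_cast hN
    nlinarith
  have h4 : 4 ≤ (lam * ((N : ℝ) - 1) + 2) ^ 2 := by nlinarith
  rw [profileSlope, div_pow, mul_div_assoc', div_le_iff₀ (by positivity)]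
  nlinarith [mul_le_mul_of_nonneg_left h4 (sq_nonneg (lam * (TR - TL)))]

lemma psiLam_nonneg (hlam : 0 ≤ lam) (hTL : 0 < TL) (hTR : 0 < TR) (ξ : ℕ → ℕ) :
    0 ≤ psiLam N lam TL TR ξ := by
  rw [psiLam_eq_prod_extendedProfile]
  exact prod_nonneg fun k hk =>
    pow_nonneg (extendedProfile_pos hlam hTL hTR (by simp at hk; omega)).le _

lemma psiLam_le_max_pow (hlam : 0 ≤ lam) (hTL : 0 < TL) (hTR : 0 < TR) (ξ : ℕ → ℕ) :
    psiLam N lam TL TR ξ ≤ max TL TR ^ ∑ k ∈ range (N + 2), ξ k := by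
  rw [psiLam_eq_prod_extendedProfile, ← prod_pow_eq_pow_sum]
  refine prod_le_prod (fun k hk => ?_) fun k hk => ?_
  · exact pow_nonneg (extendedProfile_pos hlam hTL hTR (by simp at hk; omega)).le _
  · exact pow_le_pow_left₀ (extendedProfile_pos hlam hTL hTR (by simp at hk; omega)).le
      (extendedProfile_le_max hlam (by simp at hk; omega)) _

lemma natCast_mul_psiLam_moveParticle_sub (hlam : 0 ≤ lam) (hTL : 0 < TL) (hTR : 0 < TR)
    {ξ : ℕ → ℕ} {i j : ℕ} (hi : i ≤ N + 1) (hj : j ≤ N + 1) (hij : i ≠ j) :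
    (ξ i : ℝ) * (psiLam N lam TL TR (moveParticle ξ i j) - psiLam N lam TL TR ξ) =
      ξ i * (extendedProfile N lam TL TR j / extendedProfile N lam TL TR i - 1) *
        psiLam N lam TL TR ξ := by
  simp only [psiLam_eq_prod_extendedProfile]
  exact natCast_mul_prod_pow_moveParticle_sub (by simp; omega) (by simp; omega) hij
    (extendedProfile_pos hlam hTL hTR hi).ne'

theorem dualGen_psiLam_eq (hN : 1 ≤ N) (hlam : 0 ≤ lam) (hTL : 0 < TL) (hTR : 0 < TR)
    (ξ : ℕ → ℕ) :
    dualGen N lam (psiLam N lam TL TR) ξ = psiLam N lam TL TR ξ *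
      ∑ i ∈ Icc 1 (N - 1), 4 * ξ i * ξ (i + 1) * profileSlope N lam TL TR ^ 2 /
        (extendedProfile N lam TL TR i * extendedProfile N lam TL TR (i + 1)) := by
  set T := extendedProfile N lam TL TR
  set a := profileSlope N lam TL TR
  set ψ := psiLam N lam TL TR ξ
  have hT : ∀ k ≤ N + 1, T k ≠ 0 := fun k hk => (extendedProfile_pos hlam hTL hTR hk).ne'
  have hD : lam * ((N : ℝ) - 1) + 2 ≠ 0 := by
    have : (1 : ℝ) ≤ N := by exact_mod_cast hN
    nlinarith
  have hmove : ∀ i ≤ N + 1, ∀ j ≤ N + 1, i ≠ j →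
      (ξ i : ℝ) * (psiLam N lam TL TR (moveParticle ξ i j) - ψ) =
        ξ i * (T j / T i - 1) * ψ :=
    fun i hi j hj hij => natCast_mul_psiLam_moveParticle_sub hlam hTL hTR hi hj hij
  have hbond : ∀ i ∈ Icc 1 (N - 1),
      2 * (ξ (i + 1) : ℝ) * (2 * ξ i + 1) *
          (psiLam N lam TL TR (moveParticle ξ (i + 1) i) - ψ) +
        2 * (ξ i : ℝ) * (2 * ξ (i + 1) + 1) *
          (psiLam N lam TL TR (moveParticle ξ i (i + 1)) - ψ) =
      ψ * (4 * ξ i * ξ (i + 1) * a ^ 2 / (T i * T (i + 1)) +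
        2 * a * (ξ i / T i - ξ (i + 1) / T (i + 1))) := by
    intro i hi
    obtain ⟨h1, h2⟩ := mem_Icc.1 hi
    have hTi : T i = tempProfile N lam TL TR i := extendedProfile_of_pos_of_le h1 (by omega)
    have hTi1 : T (i + 1) = tempProfile N lam TL TR (i + 1) :=
      extendedProfile_of_pos_of_le (by omega) (by omega)
    have hslope : T (i + 1) - T i = a := by rw [hTi, hTi1, tempProfile_succ_sub]
    have hA := hmove (i + 1) (by omega) i (by omega) (by omega)
    have hB := hmove i (by omega) (i + 1) (by omega) (by omega)
    have hrates :=
      sip_bond_identity (hT i (by omega)) (hT (i + 1) (by omega)) (ξ i : ℝ) (ξ (i + 1))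
    rw [hslope] at hrates
    linear_combination
      2 * (2 * (ξ i : ℝ) + 1) * hA + 2 * (2 * (ξ (i + 1) : ℝ) + 1) * hB + ψ * hrates
  have htelescope : ∑ i ∈ Icc 1 (N - 1), ((ξ i : ℝ) / T i - ξ (i + 1) / T (i + 1)) =
      ξ 1 / T 1 - ξ N / T N := by
    have h := sum_Ico_sub (fun i => (ξ i : ℝ) / T i) hN
    rw [sum_sub_distrib] at h
    rw [← Ico_add_one_right_eq_Icc, Nat.sub_add_cancel hN, sum_sub_distrib]
    linarith
  have hleft : lam * (T 0 / T 1 - 1) = -a / T 1 := by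
    have hT0 : T 0 = TL := extendedProfile_zero
    have hT1 : T 1 = tempProfile N lam TL TR 1 := extendedProfile_of_pos_of_le le_rfl hN
    rw [div_sub_one (hT 1 (by omega)), mul_div_assoc', hT0, hT1, ← neg_sub, mul_neg,
      lam_mul_tempProfile_one_sub hD, neg_div]
  have hright : lam * (T (N + 1) / T N - 1) = a / T N := by
    have hTN1 : T (N + 1) = TR := extendedProfile_succ_self
    have hTN : T N = tempProfile N lam TL TR N := extendedProfile_of_pos_of_le hN le_rfl
    rw [div_sub_one (hT N (by omega)), mul_div_assoc', hTN1, hTN, lam_mul_sub_tempProfile_self hD]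
  have h0 := hmove 1 (by omega) 0 (by omega) one_ne_zero
  have hN1 := hmove N (by omega) (N + 1) (by omega) (by omega)
  rw [dualGen, sum_congr rfl hbond, ← mul_sum, sum_add_distrib, ← mul_sum, htelescope]
  linear_combination 2 * lam * h0 + 2 * lam * hN1 + 2 * ξ 1 * ψ * hleft + 2 * ξ N * ψ * hright

theorem abs_dualGen_psiLam_le (hN : 1 ≤ N) (hlam : 0 ≤ lam)
    (hTL : 0 < TL) (hTR : 0 < TR) (ξ : ℕ → ℕ) :
    |dualGen N lam (psiLam N lam TL TR) ξ| ≤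
      max TL TR ^ (∑ k ∈ range (N + 2), ξ k) *
        ((∑ k ∈ range (N + 2), ξ k : ℕ) * (TR - TL) / min TL TR) ^ 2 * lam ^ 2 := by
  set K := ∑ k ∈ range (N + 2), ξ k
  set T := extendedProfile N lam TL TR
  set c := (lam * (TR - TL) / min TL TR) ^ 2
  have hm : 0 < min TL TR := lt_min hTL hTR
  have hterm : ∀ i ∈ Icc 1 (N - 1),
      4 * (ξ i : ℝ) * ξ (i + 1) * profileSlope N lam TL TR ^ 2 / (T i * T (i + 1)) ≤
        (ξ i * ξ (i + 1) : ℕ) * c := by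
    intro i hi
    have hi' := mem_Icc.1 hi
    have hTi : min TL TR ≤ T i := min_le_extendedProfile hlam (by omega)
    have hTi1 : min TL TR ≤ T (i + 1) := min_le_extendedProfile hlam (by omega)
    calc 4 * (ξ i : ℝ) * ξ (i + 1) * profileSlope N lam TL TR ^ 2 / (T i * T (i + 1))
        = ξ i * ξ (i + 1) * (4 * profileSlope N lam TL TR ^ 2) / (T i * T (i + 1)) := by ring
      _ ≤ ξ i * ξ (i + 1) * (lam * (TR - TL)) ^ 2 / (min TL TR * min TL TR) := by
        gcongr
        · exact four_mul_profileSlope_sq_le hN hlam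
        · exact hm.le.trans hTi
      _ = (ξ i * ξ (i + 1) : ℕ) * c := by push_cast; ring
  have hnonneg : ∀ i ∈ Icc 1 (N - 1),
      0 ≤ 4 * (ξ i : ℝ) * ξ (i + 1) * profileSlope N lam TL TR ^ 2 / (T i * T (i + 1)) := by
    intro i hi
    have hi' := mem_Icc.1 hi
    have : 0 < T i := extendedProfile_pos hlam hTL hTR (by omega)
    have : 0 < T (i + 1) := extendedProfile_pos hlam hTL hTR (by omega)
    positivity
  have hsum : ((∑ i ∈ Icc 1 (N - 1), ξ i * ξ (i + 1) : ℕ) : ℝ) ≤ (K : ℝ) ^ 2 := by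
    exact_mod_cast sum_Icc_mul_succ_le_sq N ξ
  rw [dualGen_psiLam_eq hN hlam hTL hTR, abs_mul, abs_of_nonneg (psiLam_nonneg hlam hTL hTR ξ),
    abs_of_nonneg (sum_nonneg hnonneg)]
  calc psiLam N lam TL TR ξ * ∑ i ∈ Icc 1 (N - 1),
        4 * (ξ i : ℝ) * ξ (i + 1) * profileSlope N lam TL TR ^ 2 / (T i * T (i + 1))
      ≤ max TL TR ^ K * ((∑ i ∈ Icc 1 (N - 1), ξ i * ξ (i + 1) : ℕ) * c) := by
        rw [Nat.cast_sum, sum_mul]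
        exact mul_le_mul (psiLam_le_max_pow hlam hTL hTR ξ) (sum_le_sum hterm)
          (sum_nonneg hnonneg) (by positivity)
      _ ≤ max TL TR ^ K * ((K : ℝ) ^ 2 * c) := by gcongr
      _ = max TL TR ^ K * ((K : ℝ) * (TR - TL) / min TL TR) ^ 2 * lam ^ 2 := by ring

end Profile

/-- `|(L_d ψ_λ)(ξ)| ≤ A(ξ)·λ²` for all small `λ > 0`; consequently the bound is
uniform over configurations with a fixed total number `K` of particles. -/
theorem dual_generator_local_equilibrium_lambda_sq_bound
    (N : ℕ) (hN : 2 ≤ N) (TL TR : ℝ) (hTL : 0 < TL) (hTR : 0 < TR) :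
    ∃ lam₀ > (0 : ℝ),
      (∀ ξ : ℕ → ℕ, ∃ A > (0 : ℝ), ∀ lam : ℝ, 0 < lam → lam ≤ lam₀ →
        |dualGen N lam (psiLam N lam TL TR) ξ| ≤ A * lam ^ 2) ∧
      (∀ K : ℕ, ∃ C > (0 : ℝ), ∀ ξ : ℕ → ℕ,
        (∑ i ∈ Finset.range (N + 2), ξ i) = K →
        ∀ lam : ℝ, 0 < lam → lam ≤ lam₀ →
          |dualGen N lam (psiLam N lam TL TR) ξ| ≤ C * lam ^ 2) := by
  have hbound : ∀ K : ℕ, ∃ C > (0 : ℝ), ∀ ξ : ℕ → ℕ,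
      (∑ i ∈ Finset.range (N + 2), ξ i) = K →
      ∀ lam : ℝ, 0 < lam → |dualGen N lam (psiLam N lam TL TR) ξ| ≤ C * lam ^ 2 := by
    intro K
    refine ⟨max TL TR ^ K * (K * (TR - TL) / min TL TR) ^ 2 + 1, by positivity, ?_⟩
    rintro ξ rfl lam hlam
    exact (abs_dualGen_psiLam_le (by omega) hlam.le hTL hTR ξ).trans (by gcongr; linarith)
  refine ⟨1, one_pos, fun ξ => ?_, fun K => ?_⟩
  · obtain ⟨A, hA, h⟩ := hbound _
    exact ⟨A, hA, fun lam hlam _ => h ξ rfl lam hlam⟩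
  · obtain ⟨C, hC, h⟩ := hbound K
    exact ⟨C, hC, fun ξ hξ lam hlam _ => h ξ hξ lam hlam⟩
end

section
/- Let λ > 0 and T_L, T_R ∈ ℝ, and let N = 3 with temperature profile T_i = λ(T_R−T_L)/(2λ+2)·i + (T_L + T_R + λ(3T_L − T_R))/(2λ+2), T_0 = T_L, T_4 = T_R. Then the 6×6 linear system for the two-point function of the three-site system, with matrix M = [[0,1,−2(1+λ),0,1,0],[0,0,0,0,3,−(1+λ)],[0,0,1,1,−(7+λ),1],[−(1+λ),3,0,0,0,0],[1,−(7+λ),1,1,0,0],[0,3,0,−2,3,0]] acting on (Y_{11},Y_{12},Y_{13},Y_{22},Y_{23},Y_{33}) and right-hand side D = (−λT_L T_3 − λT_R T_1, −3λT_R T_3, −λT_R T_2, −3λT_L T_1, −λT_L T_2, 0), has the unique solution Y_{11} = 3(T_R²(5+3λ) + 2T_L T_R(5+9λ+2λ²) + T_L²(5+23λ+24λ²+4λ³))/(4(1+λ)²(5+λ)), Y_{12} = (T_R²(5+3λ) + 2T_L T_R(5+4λ+λ²) + T_L²(5+13λ+2λ²))/(4(5+6λ+λ²)), Y_{13} = (T_L²(5+13λ+2λ²)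 + T_R²(5+13λ+2λ²) + 2T_L T_R(5+9λ+12λ²+2λ³))/(4(1+λ)²(5+λ)), Y_{22} = 3(2T_L T_R(5+4λ+λ²) + T_L²(5+8λ+λ²) + T_R²(5+8λ+λ²))/(4(5+6λ+λ²)), Y_{23} = (T_L²(5+3λ) + 2T_L T_R(5+4λ+λ²) + T_R²(5+13λ+2λ²))/(4(5+6λ+λ²)), Y_{33} = 3(T_L²(5+3λ) + 2T_L T_R(5+9λ+2λ²) + T_R²(5+23λ+24λ²+4λ³))/(4(1+λ)²(5+λ)). -/
set_option maxHeartbeats 2000000 in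
/-- The 6×6 linear system `M·Y = D` for the two-point function of the three-site
Brownian momentum process has the explicit rational functions of `λ, T_L, T_R`
listed in the paper's appendix as its unique solution. -/
theorem three_site_two_point_function
    (lam TL TR : ℝ) (hlam : 0 < lam) (T1 T2 T3 : ℝ)
    (hT1 : T1 = lam * (TR - TL) / (2 * lam + 2) * 1 + (TL + TR + lam * (3 * TL - TR)) / (2 * lam + 2))
    (hT2 : T2 = lam * (TR - TL) / (2 * lam + 2) * 2 + (TL + TR + lam * (3 * TL - TR)) / (2 * lam + 2))
    (hT3 : T3 = lam * (TR - TL) / (2 * lam + 2) * 3 + (TL + TR + lam * (3 * TL - TR)) / (2 * lam + 2)) :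
    ∀ Y11 Y12 Y13 Y22 Y23 Y33 : ℝ,
      (Y12 - 2 * (1 + lam) * Y13 + Y23 = -lam * TL * T3 - lam * TR * T1 ∧
        3 * Y23 - (1 + lam) * Y33 = -3 * lam * TR * T3 ∧
        Y13 + Y22 - (7 + lam) * Y23 + Y33 = -lam * TR * T2 ∧
        -(1 + lam) * Y11 + 3 * Y12 = -3 * lam * TL * T1 ∧
        Y11 - (7 + lam) * Y12 + Y13 + Y22 = -lam * TL * T2 ∧
        3 * Y12 - 2 * Y22 + 3 * Y23 = 0)
      ↔
      (Y11 = 3 * (TR ^ 2 * (5 + 3 * lam) + 2 * TL * TR * (5 + 9 * lam + 2 * lam ^ 2) +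
          TL ^ 2 * (5 + 23 * lam + 24 * lam ^ 2 + 4 * lam ^ 3)) / (4 * (1 + lam) ^ 2 * (5 + lam)) ∧
        Y12 = (TR ^ 2 * (5 + 3 * lam) + 2 * TL * TR * (5 + 4 * lam + lam ^ 2) +
          TL ^ 2 * (5 + 13 * lam + 2 * lam ^ 2)) / (4 * (5 + 6 * lam + lam ^ 2)) ∧
        Y13 = (TL ^ 2 * (5 + 13 * lam + 2 * lam ^ 2) + TR ^ 2 * (5 + 13 * lam + 2 * lam ^ 2) +
          2 * TL * TR * (5 + 9 * lam + 12 * lam ^ 2 + 2 * lam ^ 3)) / (4 * (1 + lam) ^ 2 * (5 + lam)) ∧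
        Y22 = 3 * (2 * TL * TR * (5 + 4 * lam + lam ^ 2) + TL ^ 2 * (5 + 8 * lam + lam ^ 2) +
          TR ^ 2 * (5 + 8 * lam + lam ^ 2)) / (4 * (5 + 6 * lam + lam ^ 2)) ∧
        Y23 = (TL ^ 2 * (5 + 3 * lam) + 2 * TL * TR * (5 + 4 * lam + lam ^ 2) +
          TR ^ 2 * (5 + 13 * lam + 2 * lam ^ 2)) / (4 * (5 + 6 * lam + lam ^ 2)) ∧
        Y33 = 3 * (TL ^ 2 * (5 + 3 * lam) + 2 * TL * TR * (5 + 9 * lam + 2 * lam ^ 2) +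
          TR ^ 2 * (5 + 23 * lam + 24 * lam ^ 2 + 4 * lam ^ 3)) / (4 * (1 + lam) ^ 2 * (5 + lam))) := by
  subst hT1 hT2 hT3
  have ha : (1 : ℝ) + lam ≠ 0 := by positivity
  have h5 : (5 : ℝ) + lam ≠ 0 := by positivity
  have h2 : 2 * lam + 2 ≠ 0 := by positivity
  have h56 : 5 + 6 * lam + lam ^ 2 ≠ 0 := by positivity
  have hl : lam ≠ 0 := ne_of_gt hlam
  intro Y11 Y12 Y13 Y22 Y23 Y33
  set S11 : ℝ := 3 * (TR ^ 2 * (5 + 3 * lam) + 2 * TL * TR * (5 + 9 * lam + 2 * lam ^ 2) +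
      TL ^ 2 * (5 + 23 * lam + 24 * lam ^ 2 + 4 * lam ^ 3)) / (4 * (1 + lam) ^ 2 * (5 + lam)) with hS11
  set S12 : ℝ := (TR ^ 2 * (5 + 3 * lam) + 2 * TL * TR * (5 + 4 * lam + lam ^ 2) +
      TL ^ 2 * (5 + 13 * lam + 2 * lam ^ 2)) / (4 * (5 + 6 * lam + lam ^ 2)) with hS12
  set S13 : ℝ := (TL ^ 2 * (5 + 13 * lam + 2 * lam ^ 2) + TR ^ 2 * (5 + 13 * lam + 2 * lam ^ 2) +
      2 * TL * TR * (5 + 9 * lam + 12 * lam ^ 2 + 2 * lam ^ 3)) / (4 * (1 + lam) ^ 2 * (5 + lam)) with hS13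
  set S22 : ℝ := 3 * (2 * TL * TR * (5 + 4 * lam + lam ^ 2) + TL ^ 2 * (5 + 8 * lam + lam ^ 2) +
      TR ^ 2 * (5 + 8 * lam + lam ^ 2)) / (4 * (5 + 6 * lam + lam ^ 2)) with hS22
  set S23 : ℝ := (TL ^ 2 * (5 + 3 * lam) + 2 * TL * TR * (5 + 4 * lam + lam ^ 2) +
      TR ^ 2 * (5 + 13 * lam + 2 * lam ^ 2)) / (4 * (5 + 6 * lam + lam ^ 2)) with hS23
  set S33 : ℝ := 3 * (TL ^ 2 * (5 + 3 * lam) + 2 * TL * TR * (5 + 9 * lam + 2 * lam ^ 2) +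
      TR ^ 2 * (5 + 23 * lam + 24 * lam ^ 2 + 4 * lam ^ 3)) / (4 * (1 + lam) ^ 2 * (5 + lam)) with hS33
  have hS : (S12 - 2 * (1 + lam) * S13 + S23 =
        -lam * TL * (lam * (TR - TL) / (2 * lam + 2) * 3 + (TL + TR + lam * (3 * TL - TR)) / (2 * lam + 2))
        - lam * TR * (lam * (TR - TL) / (2 * lam + 2) * 1 + (TL + TR + lam * (3 * TL - TR)) / (2 * lam + 2)) ∧
      3 * S23 - (1 + lam) * S33 =
        -3 * lam * TR * (lam * (TR - TL) / (2 * lam + 2) * 3 + (TL + TR + lam * (3 * TL - TR)) / (2 * lam + 2)) ∧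
      S13 + S22 - (7 + lam) * S23 + S33 =
        -lam * TR * (lam * (TR - TL) / (2 * lam + 2) * 2 + (TL + TR + lam * (3 * TL - TR)) / (2 * lam + 2)) ∧
      -(1 + lam) * S11 + 3 * S12 =
        -3 * lam * TL * (lam * (TR - TL) / (2 * lam + 2) * 1 + (TL + TR + lam * (3 * TL - TR)) / (2 * lam + 2)) ∧
      S11 - (7 + lam) * S12 + S13 + S22 =
        -lam * TL * (lam * (TR - TL) / (2 * lam + 2) * 2 + (TL + TR + lam * (3 * TL - TR)) / (2 * lam + 2)) ∧
      3 * S12 - 2 * S22 + 3 * S23 = 0) := by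
    refine ⟨?_, ?_, ?_, ?_, ?_, ?_⟩ <;>
      simp only [hS11, hS12, hS13, hS22, hS23, hS33] <;>
      field_simp <;> ring
  obtain ⟨f1, f2, f3, f4, f5, f6⟩ := hS
  constructor
  · rintro ⟨e1, e2, e3, e4, e5, e6⟩
    have h48 : (4 : ℝ) + 8 * lam + lam ^ 2 ≠ 0 := by positivity
    have key1 : (4 + 8 * lam + lam ^ 2) * ((Y12 - S12) - (Y23 - S23)) = 0 := by
      linear_combination (1 + lam) * e3 - (1 + lam) * f3 - (1 + lam) * e5 + (1 + lam) * f5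
        - e4 + f4 + e2 - f2
    have hz : (Y12 - S12) - (Y23 - S23) = 0 :=
      (mul_eq_zero.mp key1).resolve_left h48
    have key2 : 2 * lam * (5 + lam) * (Y12 - S12) = 0 := by
      linear_combination (-2 * (1 + lam)) * e3 + 2 * (1 + lam) * f3 - e1 + f1
        - (1 + lam) * e6 + (1 + lam) * f6 - 2 * e2 + 2 * f2
        + (-(7 + 3 * (1 + lam) - 2 * (1 + lam) * (7 + lam))) * hz
    have h2l5 : 2 * lam * (5 + lam) ≠ 0 := by positivity
    have h12 : Y12 = S12 := by
      have := (mul_eq_zero.mp key2).resolve_left h2l5; linarith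
    have h23 : Y23 = S23 := by linarith
    have h22 : Y22 = S22 := by
      linear_combination (-1 / 2 : ℝ) * e6 + (1 / 2 : ℝ) * f6 + (3 / 2 : ℝ) * h12 + (3 / 2 : ℝ) * h23
    have k13 : 2 * (1 + lam) * (Y13 - S13) = 0 := by
      linear_combination -e1 + f1 + h12 + h23
    have h2a : 2 * (1 + lam) ≠ 0 := by positivity
    have h13 : Y13 = S13 := by
      have := (mul_eq_zero.mp k13).resolve_left h2a; linarith
    have k11 : (1 + lam) * (Y11 - S11) = 0 := by
      linear_combination -e4 + f4 + 3 * h12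
    have h11 : Y11 = S11 := by
      have := (mul_eq_zero.mp k11).resolve_left ha; linarith
    have k33 : (1 + lam) * (Y33 - S33) = 0 := by
      linear_combination -e2 + f2 + 3 * h23
    have h33 : Y33 = S33 := by
      have := (mul_eq_zero.mp k33).resolve_left ha; linarith
    exact ⟨h11, h12, h13, h22, h23, h33⟩
  · rintro ⟨r11, r12, r13, r22, r23, r33⟩
    subst r11 r12 r13 r22 r23 r33
    exact ⟨f1, f2, f3, f4, f5, f6⟩
end

section
/- Let λ > 0 and T_L, T_R ∈ ℝ. For the three-site system, define the correlations C_{kl} = Y_{kl} − T_k T_l (1 + 2δ_{kl}), where Y is the explicit two-point function of the three-site system and T_i is the temperature profile. Then C_{11} = C_{33} = 3(T_L−T_R)²λ/(2(1+λ)²(5+λ)), C_{13} = (T_L−T_R)²λ/(2(1+λ)²(5+λ)), C_{12} = C_{23} = (T_L−T_R)²λ/(2(5+6λ+λ²)), and C_{22} = 3(T_L−T_R)²λ/(2(5+6λ+λ²)). In particular, every C_{kl} is a nonnegative multiple of λ(T_L−T_R)², so C_{kl} ≥ 0 and C_{kl} = 0 whenever T_L = T_R or λ = 0. -/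
/-- Two-point correlations `C_{kl} = Y_{kl} − T_k T_l (1 + 2δ_{kl})` of the
three-site system: explicit formulas, each a nonnegative multiple of
`λ(T_L − T_R)²`, hence nonnegative and vanishing when `T_L = T_R`. -/
theorem three_site_correlations
    (lam TL TR : ℝ) (hlam : 0 < lam) (T1 T2 T3 : ℝ)
    (hT1 : T1 = lam * (TR - TL) / (2 * lam + 2) * 1 + (TL + TR + lam * (3 * TL - TR)) / (2 * lam + 2))
    (hT2 : T2 = lam * (TR - TL) / (2 * lam + 2) * 2 + (TL + TR + lam * (3 * TL - TR)) / (2 * lam + 2))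
    (hT3 : T3 = lam * (TR - TL) / (2 * lam + 2) * 3 + (TL + TR + lam * (3 * TL - TR)) / (2 * lam + 2))
    (Y11 Y12 Y13 Y22 Y23 Y33 : ℝ)
    (hY11 : Y11 = 3 * (TR ^ 2 * (5 + 3 * lam) + 2 * TL * TR * (5 + 9 * lam + 2 * lam ^ 2) +
      TL ^ 2 * (5 + 23 * lam + 24 * lam ^ 2 + 4 * lam ^ 3)) / (4 * (1 + lam) ^ 2 * (5 + lam)))
    (hY12 : Y12 = (TR ^ 2 * (5 + 3 * lam) + 2 * TL * TR * (5 + 4 * lam + lam ^ 2) +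
      TL ^ 2 * (5 + 13 * lam + 2 * lam ^ 2)) / (4 * (5 + 6 * lam + lam ^ 2)))
    (hY13 : Y13 = (TL ^ 2 * (5 + 13 * lam + 2 * lam ^ 2) + TR ^ 2 * (5 + 13 * lam + 2 * lam ^ 2) +
      2 * TL * TR * (5 + 9 * lam + 12 * lam ^ 2 + 2 * lam ^ 3)) / (4 * (1 + lam) ^ 2 * (5 + lam)))
    (hY22 : Y22 = 3 * (2 * TL * TR * (5 + 4 * lam + lam ^ 2) + TL ^ 2 * (5 + 8 * lam + lam ^ 2) +
      TR ^ 2 * (5 + 8 * lam + lam ^ 2)) / (4 * (5 + 6 * lam + lam ^ 2)))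
    (hY23 : Y23 = (TL ^ 2 * (5 + 3 * lam) + 2 * TL * TR * (5 + 4 * lam + lam ^ 2) +
      TR ^ 2 * (5 + 13 * lam + 2 * lam ^ 2)) / (4 * (5 + 6 * lam + lam ^ 2)))
    (hY33 : Y33 = 3 * (TL ^ 2 * (5 + 3 * lam) + 2 * TL * TR * (5 + 9 * lam + 2 * lam ^ 2) +
      TR ^ 2 * (5 + 23 * lam + 24 * lam ^ 2 + 4 * lam ^ 3)) / (4 * (1 + lam) ^ 2 * (5 + lam)))
    (C11 C12 C13 C22 C23 C33 : ℝ)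
    (hC11 : C11 = Y11 - T1 * T1 * 3) (hC12 : C12 = Y12 - T1 * T2)
    (hC13 : C13 = Y13 - T1 * T3) (hC22 : C22 = Y22 - T2 * T2 * 3)
    (hC23 : C23 = Y23 - T2 * T3) (hC33 : C33 = Y33 - T3 * T3 * 3) :
    (C11 = 3 * (TL - TR) ^ 2 * lam / (2 * (1 + lam) ^ 2 * (5 + lam)) ∧
      C33 = 3 * (TL - TR) ^ 2 * lam / (2 * (1 + lam) ^ 2 * (5 + lam)) ∧
      C13 = (TL - TR) ^ 2 * lam / (2 * (1 + lam) ^ 2 * (5 + lam)) ∧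
      C12 = (TL - TR) ^ 2 * lam / (2 * (5 + 6 * lam + lam ^ 2)) ∧
      C23 = (TL - TR) ^ 2 * lam / (2 * (5 + 6 * lam + lam ^ 2)) ∧
      C22 = 3 * (TL - TR) ^ 2 * lam / (2 * (5 + 6 * lam + lam ^ 2))) ∧
    (0 ≤ C11 ∧ 0 ≤ C12 ∧ 0 ≤ C13 ∧ 0 ≤ C22 ∧ 0 ≤ C23 ∧ 0 ≤ C33) ∧
    (TL = TR → C11 = 0 ∧ C12 = 0 ∧ C13 = 0 ∧ C22 = 0 ∧ C23 = 0 ∧ C33 = 0) := by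
  have h1 : (1 + lam) ≠ 0 := by positivity
  have h2 : (5 + lam) ≠ 0 := by positivity
  have h3 : (2 * lam + 2) ≠ 0 := by positivity
  have h4 : (5 + 6 * lam + lam ^ 2) ≠ 0 := by positivity
  subst hT1 hT2 hT3 hY11 hY12 hY13 hY22 hY23 hY33 hC11 hC12 hC13 hC22 hC23 hC33
  have e11 : 3 * (TR ^ 2 * (5 + 3 * lam) + 2 * TL * TR * (5 + 9 * lam + 2 * lam ^ 2) +
      TL ^ 2 * (5 + 23 * lam + 24 * lam ^ 2 + 4 * lam ^ 3)) / (4 * (1 + lam) ^ 2 * (5 + lam)) -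
      (lam * (TR - TL) / (2 * lam + 2) * 1 + (TL + TR + lam * (3 * TL - TR)) / (2 * lam + 2)) *
      (lam * (TR - TL) / (2 * lam + 2) * 1 + (TL + TR + lam * (3 * TL - TR)) / (2 * lam + 2)) * 3 =
      3 * (TL - TR) ^ 2 * lam / (2 * (1 + lam) ^ 2 * (5 + lam)) := by
    field_simp
    ring
  have e33 : 3 * (TL ^ 2 * (5 + 3 * lam) + 2 * TL * TR * (5 + 9 * lam + 2 * lam ^ 2) +
      TR ^ 2 * (5 + 23 * lam + 24 * lam ^ 2 + 4 * lam ^ 3)) / (4 * (1 + lam) ^ 2 * (5 + lam)) -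
      (lam * (TR - TL) / (2 * lam + 2) * 3 + (TL + TR + lam * (3 * TL - TR)) / (2 * lam + 2)) *
      (lam * (TR - TL) / (2 * lam + 2) * 3 + (TL + TR + lam * (3 * TL - TR)) / (2 * lam + 2)) * 3 =
      3 * (TL - TR) ^ 2 * lam / (2 * (1 + lam) ^ 2 * (5 + lam)) := by
    field_simp
    ring
  have e13 : (TL ^ 2 * (5 + 13 * lam + 2 * lam ^ 2) + TR ^ 2 * (5 + 13 * lam + 2 * lam ^ 2) +
      2 * TL * TR * (5 + 9 * lam + 12 * lam ^ 2 + 2 * lam ^ 3)) / (4 * (1 + lam) ^ 2 * (5 + lam)) -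
      (lam * (TR - TL) / (2 * lam + 2) * 1 + (TL + TR + lam * (3 * TL - TR)) / (2 * lam + 2)) *
      (lam * (TR - TL) / (2 * lam + 2) * 3 + (TL + TR + lam * (3 * TL - TR)) / (2 * lam + 2)) =
      (TL - TR) ^ 2 * lam / (2 * (1 + lam) ^ 2 * (5 + lam)) := by
    field_simp
    ring
  have e12 : (TR ^ 2 * (5 + 3 * lam) + 2 * TL * TR * (5 + 4 * lam + lam ^ 2) +
      TL ^ 2 * (5 + 13 * lam + 2 * lam ^ 2)) / (4 * (5 + 6 * lam + lam ^ 2)) -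
      (lam * (TR - TL) / (2 * lam + 2) * 1 + (TL + TR + lam * (3 * TL - TR)) / (2 * lam + 2)) *
      (lam * (TR - TL) / (2 * lam + 2) * 2 + (TL + TR + lam * (3 * TL - TR)) / (2 * lam + 2)) =
      (TL - TR) ^ 2 * lam / (2 * (5 + 6 * lam + lam ^ 2)) := by
    field_simp
    ring
  have e23 : (TL ^ 2 * (5 + 3 * lam) + 2 * TL * TR * (5 + 4 * lam + lam ^ 2) +
      TR ^ 2 * (5 + 13 * lam + 2 * lam ^ 2)) / (4 * (5 + 6 * lam + lam ^ 2)) -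
      (lam * (TR - TL) / (2 * lam + 2) * 2 + (TL + TR + lam * (3 * TL - TR)) / (2 * lam + 2)) *
      (lam * (TR - TL) / (2 * lam + 2) * 3 + (TL + TR + lam * (3 * TL - TR)) / (2 * lam + 2)) =
      (TL - TR) ^ 2 * lam / (2 * (5 + 6 * lam + lam ^ 2)) := by
    field_simp
    ring
  have e22 : 3 * (2 * TL * TR * (5 + 4 * lam + lam ^ 2) + TL ^ 2 * (5 + 8 * lam + lam ^ 2) +
      TR ^ 2 * (5 + 8 * lam + lam ^ 2)) / (4 * (5 + 6 * lam + lam ^ 2)) -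
      (lam * (TR - TL) / (2 * lam + 2) * 2 + (TL + TR + lam * (3 * TL - TR)) / (2 * lam + 2)) *
      (lam * (TR - TL) / (2 * lam + 2) * 2 + (TL + TR + lam * (3 * TL - TR)) / (2 * lam + 2)) * 3 =
      3 * (TL - TR) ^ 2 * lam / (2 * (5 + 6 * lam + lam ^ 2)) := by
    field_simp
    ring
  rw [e11, e12, e13, e22, e23, e33]
  refine ⟨⟨rfl, rfl, rfl, rfl, rfl, rfl⟩, ⟨by positivity, by positivity, by positivity,
    by positivity, by positivity, by positivity⟩, fun h => ?_⟩
  subst h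
  norm_num
end

section
/- Let λ > 0 and T_L, T_R ∈ ℝ, and let Y_{11}, Y_{22}, Y_{33}, Y_{44} denote the diagonal two-point functions of the four-site system, i.e. Y_{11} = (6T_R²(12+λ(14+3λ)) + 6T_L T_R(24+λ(76+5λ(8+λ))) + T_L²(72+3λ(172+3λ(106+λ(46+5λ)))))/Δ, Y_{22} = 3(2T_L T_R(24+λ(76+λ(73+3λ(9+λ)))) + T_L²(24+λ(124+λ(181+7λ(10+λ)))) + T_R²(24+λ(76+λ(77+2λ(12+λ)))))/Δ, Y_{33} = 3(2T_L T_R(24+λ(76+λ(73+3λ(9+λ)))) + T_R²(24+λ(124+λ(181+7λ(10+λ)))) + T_L²(24+λ(76+λ(77+2λ(12+λ)))))/Δ, Y_{44} = (6T_L²(12+λ(14+3λ)) + 6T_L T_R(24+λ(76+5λ(8+λ))) + 3T_R²(24+λ(172+3λ(106+λ(46+5λ)))))/Δ with Δ = (6+λ)(2+3λ)(8+λ(16+5λ)). Then the diagonal part of the multilinear ansatz holds: there exist real constants A, B, D (depending on λ, T_L, T_R) such that Y_{ii} = A + B·i + D·i² for all i ∈ {1,2,3,4}; equivalently, the third finite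 difference Y_{44} − 3Y_{33} + 3Y_{22} − Y_{11} = 0. -/
/-- The diagonal part of the multilinear ansatz holds for the four-site system:
there are constants `A, B, D` with `Y_{ii} = A + B·i + D·i²` for `i = 1,2,3,4`;
equivalently the third finite difference `Y_{44} − 3Y_{33} + 3Y_{22} − Y_{11}`
vanishes. -/
theorem four_site_diagonal_quadratic_ansatz
    (lam TL TR : ℝ) (hlam : 0 < lam) (Y11 Y22 Y33 Y44 : ℝ)
    (h11 : Y11 = (6 * TR ^ 2 * (12 + lam * (14 + 3 * lam)) +
      6 * TL * TR * (24 + lam * (76 + 5 * lam * (8 + lam))) +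
      TL ^ 2 * (72 + 3 * lam * (172 + 3 * lam * (106 + lam * (46 + 5 * lam))))) /
      ((6 + lam) * (2 + 3 * lam) * (8 + lam * (16 + 5 * lam))))
    (h22 : Y22 = 3 * (2 * TL * TR * (24 + lam * (76 + lam * (73 + 3 * lam * (9 + lam)))) +
      TL ^ 2 * (24 + lam * (124 + lam * (181 + 7 * lam * (10 + lam)))) +
      TR ^ 2 * (24 + lam * (76 + lam * (77 + 2 * lam * (12 + lam))))) /
      ((6 + lam) * (2 + 3 * lam) * (8 + lam * (16 + 5 * lam))))
    (h33 : Y33 = 3 * (2 * TL * TR * (24 + lam * (76 + lam * (73 + 3 * lam * (9 + lam)))) +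
      TR ^ 2 * (24 + lam * (124 + lam * (181 + 7 * lam * (10 + lam)))) +
      TL ^ 2 * (24 + lam * (76 + lam * (77 + 2 * lam * (12 + lam))))) /
      ((6 + lam) * (2 + 3 * lam) * (8 + lam * (16 + 5 * lam))))
    (h44 : Y44 = (6 * TL ^ 2 * (12 + lam * (14 + 3 * lam)) +
      6 * TL * TR * (24 + lam * (76 + 5 * lam * (8 + lam))) +
      3 * TR ^ 2 * (24 + lam * (172 + 3 * lam * (106 + lam * (46 + 5 * lam))))) /
      ((6 + lam) * (2 + 3 * lam) * (8 + lam * (16 + 5 * lam)))) :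
    (∃ A B D : ℝ,
      Y11 = A + B * 1 + D * 1 ^ 2 ∧
      Y22 = A + B * 2 + D * 2 ^ 2 ∧
      Y33 = A + B * 3 + D * 3 ^ 2 ∧
      Y44 = A + B * 4 + D * 4 ^ 2) ∧
    Y44 - 3 * Y33 + 3 * Y22 - Y11 = 0 := by
  have h1 : (6 + lam) ≠ 0 := by positivity
  have h2 : (2 + 3 * lam) ≠ 0 := by positivity
  have h3 : (8 + lam * (16 + 5 * lam)) ≠ 0 := by positivity
  have key : Y44 - 3 * Y33 + 3 * Y22 - Y11 = 0 := by
    subst h11 h22 h33 h44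
    field_simp
    ring
  refine ⟨⟨3 * Y11 - 3 * Y22 + Y33, -(5 / 2) * Y11 + 4 * Y22 - (3 / 2) * Y33,
    (1 / 2) * Y11 - Y22 + (1 / 2) * Y33, by ring, by ring, by ring, by linarith⟩, key⟩
end

section
/- Let λ > 0 and T_L, T_R ∈ ℝ, and let Y_{12}, Y_{13}, Y_{14}, Y_{23}, Y_{34} be the explicit off-diagonal two-point functions of the four-site system. Let a, b, c, d ∈ ℝ be the (unique) solution of the fitting system a + b + 2c + 2d = Y_{12}, a + b + 3c + 3d = Y_{13}, a + 2b + 3c + 6d = Y_{23}, a + 3b + 4c + 12d = Y_{34} (i.e. the bilinear ansatz Y_{ij} = a + b·i + c·j + d·ij fitted to Y_{12}, Y_{13}, Y_{23}, Y_{34}). Then Y_{14} − (a + b + 4c + 4d) = 3(T_L − T_R)²(λ − 1)λ² / ((6+λ)(2+3λ)(8+λ(16+5λ))). In particular, if T_L ≠ T_R and λ ∉ {0, 1}, this deviation is nonzero, so no bilinear function a + bi + cj + dij can reproduce all off-diagonal two-point correlations of the four-site system; the deviation vanishes at λ = 1 and tends to 0 as λ → ∞. -/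
open Filter Topology

/-- Failure of the bilinear ansatz for the four-site system: fitting
`Y_{ij} = a + b·i + c·j + d·ij` to `Y_{12}, Y_{13}, Y_{23}, Y_{34}` (a uniquely
solvable system), the predicted value at `(1,4)` deviates from `Y_{14}` by exactly
`3(T_L − T_R)²(λ − 1)λ²/((6+λ)(2+3λ)(8+λ(16+5λ)))`, which is nonzero whenever
`T_L ≠ T_R` and `λ ≠ 1`, vanishes at `λ = 1`, and tends to `0` as `λ → ∞`. -/
theorem four_site_bilinear_ansatz_fails
    (lam TL TR : ℝ) (hlam : 0 < lam) (Y12 Y13 Y14 Y23 Y34 : ℝ)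
    (h12 : Y12 = (2 * TR ^ 2 * (1 + lam) * (12 + lam * (14 + 3 * lam)) +
      TL * TR * (48 + lam * (152 + lam * (128 + lam * (44 + 5 * lam)))) +
      2 * TL ^ 2 * (12 + lam * (74 + lam * (121 + lam * (49 + 5 * lam))))) /
      ((6 + lam) * (2 + 3 * lam) * (8 + lam * (16 + 5 * lam))))
    (h13 : Y13 = (TL ^ 2 * (1 + lam) * (24 + 5 * lam * (4 + lam) * (5 + lam)) +
      TR ^ 2 * (24 + lam * (76 + lam * (41 + 4 * lam))) +
      2 * TL * TR * (24 + lam * (76 + lam * (109 + lam * (47 + 5 * lam))))) /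
      ((6 + lam) * (2 + 3 * lam) * (8 + lam * (16 + 5 * lam))))
    (h14 : Y14 = (TL ^ 2 * (24 + 5 * lam * (4 + lam) * (5 + lam)) +
      TR ^ 2 * (24 + 5 * lam * (4 + lam) * (5 + lam)) +
      TL * TR * (48 + lam * (152 + lam * (314 + 3 * lam * (46 + 5 * lam))))) /
      ((6 + lam) * (2 + 3 * lam) * (8 + lam * (16 + 5 * lam))))
    (h23 : Y23 = (2 * TL ^ 2 * (12 + lam * (5 + 2 * lam) * (10 + lam * (8 + lam))) +
      2 * TR ^ 2 * (12 + lam * (5 + 2 * lam) * (10 + lam * (8 + lam))) +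
      TL * TR * (2 + lam) * (24 + lam * (64 + lam * (50 + 7 * lam)))) /
      ((6 + lam) * (2 + 3 * lam) * (8 + lam * (16 + 5 * lam))))
    (h34 : Y34 = (2 * TL ^ 2 * (1 + lam) * (12 + lam * (14 + 3 * lam)) +
      TL * TR * (48 + lam * (152 + lam * (128 + lam * (44 + 5 * lam)))) +
      2 * TR ^ 2 * (12 + lam * (74 + lam * (121 + lam * (49 + 5 * lam))))) /
      ((6 + lam) * (2 + 3 * lam) * (8 + lam * (16 + 5 * lam)))) :
    (∃! v : ℝ × ℝ × ℝ × ℝ,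
      v.1 + v.2.1 + 2 * v.2.2.1 + 2 * v.2.2.2 = Y12 ∧
      v.1 + v.2.1 + 3 * v.2.2.1 + 3 * v.2.2.2 = Y13 ∧
      v.1 + 2 * v.2.1 + 3 * v.2.2.1 + 6 * v.2.2.2 = Y23 ∧
      v.1 + 3 * v.2.1 + 4 * v.2.2.1 + 12 * v.2.2.2 = Y34) ∧
    (∀ a b c d : ℝ,
      (a + b + 2 * c + 2 * d = Y12 ∧
       a + b + 3 * c + 3 * d = Y13 ∧
       a + 2 * b + 3 * c + 6 * d = Y23 ∧
       a + 3 * b + 4 * c + 12 * d = Y34) →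
      (Y14 - (a + b + 4 * c + 4 * d) =
          3 * (TL - TR) ^ 2 * (lam - 1) * lam ^ 2 /
            ((6 + lam) * (2 + 3 * lam) * (8 + lam * (16 + 5 * lam))) ∧
        (TL ≠ TR → lam ≠ 1 → Y14 - (a + b + 4 * c + 4 * d) ≠ 0) ∧
        (lam = 1 → Y14 - (a + b + 4 * c + 4 * d) = 0))) ∧
    Tendsto (fun t : ℝ =>
        3 * (TL - TR) ^ 2 * (t - 1) * t ^ 2 /
          ((6 + t) * (2 + 3 * t) * (8 + t * (16 + 5 * t))))
      atTop (𝓝 0) := by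
  have hden : (6 + lam) * (2 + 3 * lam) * (8 + lam * (16 + 5 * lam)) ≠ 0 := by
    positivity
  refine ⟨?_, ?_, ?_⟩
  · -- unique solvability
    set d0 : ℝ := (Y12 - 2 * Y23 + Y34) / 2 with hd0
    set c0 : ℝ := Y13 - Y12 - d0 with hc0
    set b0 : ℝ := Y23 - Y13 - 3 * d0 with hb0
    set a0 : ℝ := Y12 - b0 - 2 * c0 - 2 * d0 with ha0
    refine ⟨(a0, b0, c0, d0), ⟨by simp [ha0, hb0, hc0, hd0]; ring,
      by simp [ha0, hb0, hc0, hd0]; ring, by simp [ha0, hb0, hc0, hd0]; ring,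
      by simp [ha0, hb0, hc0, hd0]; ring⟩, ?_⟩
    rintro ⟨a, b, c, d⟩ ⟨e1, e2, e3, e4⟩
    simp only [Prod.mk.injEq]
    simp only at e1 e2 e3 e4
    refine ⟨by simp [ha0, hb0, hc0, hd0]; linarith, by simp [hb0, hd0]; linarith,
      by simp [hc0, hd0]; linarith, by simp [hd0]; linarith⟩
  · rintro a b c d ⟨e1, e2, e3, e4⟩
    have key : Y14 - (a + b + 4 * c + 4 * d) =
        3 * (TL - TR) ^ 2 * (lam - 1) * lam ^ 2 /
          ((6 + lam) * (2 + 3 * lam) * (8 + lam * (16 + 5 * lam))) := by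
      have pred : a + b + 4 * c + 4 * d = 2 * Y13 - Y12 := by linarith
      rw [pred, h12, h13, h14]
      field_simp
      ring
    refine ⟨key, ?_, ?_⟩
    · intro hT hl
      rw [key]
      apply div_ne_zero _ hden
      have h1 : TL - TR ≠ 0 := sub_ne_zero.mpr hT
      have h2 : lam - 1 ≠ 0 := sub_ne_zero.mpr hl
      have h3 : lam ≠ 0 := ne_of_gt hlam
      positivity
    · intro hl
      rw [key, hl]
      simp
  · -- limit
    have := Polynomial.div_tendsto_zero_of_degree_lt
      (Polynomial.C (3 * (TL - TR) ^ 2) * (Polynomial.X - 1) * Polynomial.X ^ 2)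
      ((6 + Polynomial.X) * (2 + 3 * Polynomial.X) *
        (8 + Polynomial.X * (16 + 5 * Polynomial.X)))
      (by
        apply lt_of_le_of_lt (b := (3 : WithBot ℕ))
        · compute_degree
        · rw [show (((6 : Polynomial ℝ)) + Polynomial.X) * (2 + 3 * Polynomial.X) *
            (8 + Polynomial.X * (16 + 5 * Polynomial.X)) =
            15 * Polynomial.X ^ 4 + 148 * Polynomial.X ^ 3 + 404 * Polynomial.X ^ 2
              + 352 * Polynomial.X + 96 by ring]
          have hdeg : (((15 : Polynomial ℝ)) * Polynomial.X ^ 4 + 148 * Polynomial.X ^ 3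
              + 404 * Polynomial.X ^ 2 + 352 * Polynomial.X + 96).degree = 4 := by
            compute_degree!
          rw [hdeg]
          norm_num)
    convert this using 2 with t
    simp [Polynomial.eval_mul, Polynomial.eval_add, Polynomial.eval_pow]
end
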